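/- arXiv:2008.02975 — 3 statements merged into one kernel-verified Lean document; each statement's English description precedes it below -/
import Mathlib

section
/- Let G be a finite simple graph of order n ≥ 2 with no isolated vertices, and let S be a dominating set of the middle graph M(G). Then there exists a dominating set S' of M(G) consisting only of vertices of M(G) that correspond to edges of G, with |S'| ≤ |S|. -/
/-- `S` is a dominating set of the graph `H`. -/
def IsDomSet {V : Type*} (H : SimpleGraph V) (S : Set V) : Prop :=
  ∀ v : V, v ∈ S ∨ ∃ s ∈ S, H.Adj v s

/-- The domination number of a graph `H`. -/
noncomputable def domNum {V : Type*} (H : SimpleGraph V) : ℕ :=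
  sInf {k : ℕ | ∃ S : Set V, IsDomSet H S ∧ S.ncard = k}

/-- The middle graph `M(G)` of a graph `G`: its vertices are the vertices and edges
of `G`; a vertex is adjacent to the edges incident to it, and two edges are adjacent
iff they are distinct and share an endpoint. -/
def middleGraph {V : Type*} (G : SimpleGraph V) : SimpleGraph (V ⊕ G.edgeSet) where
  Adj x y :=
    match x, y with
    | Sum.inl _, Sum.inl _ => False
    | Sum.inl v, Sum.inr e => v ∈ (e : Sym2 V)
    | Sum.inr e, Sum.inl v => v ∈ (e : Sym2 V)
    | Sum.inr e, Sum.inr f => e ≠ f ∧ ∃ v, v ∈ (e : Sym2 V) ∧ v ∈ (f : Sym2 V)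
  symm := by
    constructor
    rintro (v | e) (w | f) h
    · exact h.elim
    · exact h
    · exact h
    · exact ⟨Ne.symm h.1, h.2.imp fun v hv => ⟨hv.2, hv.1⟩⟩
  loopless := by
    constructor
    rintro (v | e) h
    · exact h.elim
    · exact h.1 rfl

/-!
Replace every vertex `v` of `G` in `S` by an edge incident to `v` (one exists since `v` is not
isolated). In `M(G)` the closed neighbourhood of `v` consists of `v` and its incident edges, all of
which are dominated by any edge at `v`; so the image of `S` still dominates `M(G)`, and it is no
larger than `S`.
-/

theorem IsDomSet.image {W : Type*} {H : SimpleGraph W} {S : Set W} (hS : IsDomSet H S)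
    (f : W → W) (hf : ∀ x y, y = x ∨ H.Adj y x → y = f x ∨ H.Adj y (f x)) :
    IsDomSet H (f '' S) := by
  intro y
  obtain ⟨x, hxS, hyx⟩ : ∃ x ∈ S, y = x ∨ H.Adj y x := by
    rcases hS y with hy | ⟨x, hxS, hadj⟩
    · exact ⟨y, hy, Or.inl rfl⟩
    · exact ⟨x, hxS, Or.inr hadj⟩
  rcases hf x y hyx with rfl | hadj
  · exact Or.inl ⟨x, hxS, rfl⟩
  · exact Or.inr ⟨f x, ⟨x, hxS, rfl⟩, hadj⟩

namespace middleGraph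

variable {V : Type*} {G : SimpleGraph V}

theorem not_adj_inl_inl (v w : V) : ¬(middleGraph G).Adj (Sum.inl v) (Sum.inl w) :=
  id

theorem adj_inl_inr {v : V} {e : G.edgeSet} :
    (middleGraph G).Adj (Sum.inl v) (Sum.inr e) ↔ v ∈ (e : Sym2 V) :=
  Iff.rfl

theorem adj_inr_inl {e : G.edgeSet} {v : V} :
    (middleGraph G).Adj (Sum.inr e) (Sum.inl v) ↔ v ∈ (e : Sym2 V) :=
  Iff.rfl

theorem adj_inr_inr {e f : G.edgeSet} :
    (middleGraph G).Adj (Sum.inr e) (Sum.inr f) ↔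
      e ≠ f ∧ ∃ v, v ∈ (e : Sym2 V) ∧ v ∈ (f : Sym2 V) :=
  Iff.rfl

theorem eq_or_adj_edge_of_eq_or_adj_vertex {v : V} {e : G.edgeSet} (hve : v ∈ (e : Sym2 V))
    {y : V ⊕ G.edgeSet} (hy : y = Sum.inl v ∨ (middleGraph G).Adj y (Sum.inl v)) :
    y = Sum.inr e ∨ (middleGraph G).Adj y (Sum.inr e) := by
  rcases hy with rfl | hadj
  · exact Or.inr (adj_inl_inr.mpr hve)
  rcases y with w | e'
  · exact (not_adj_inl_inl w v hadj).elim
  by_cases he : e' = e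
  · exact Or.inl (congrArg Sum.inr he)
  · exact Or.inr (adj_inr_inr.mpr ⟨he, v, adj_inr_inl.mp hadj, hve⟩)

def toEdge (ev : V → G.edgeSet) : V ⊕ G.edgeSet → V ⊕ G.edgeSet :=
  Sum.elim (Sum.inr ∘ ev) Sum.inr

theorem isDomSet_image_toEdge {ev : V → G.edgeSet} (hev : ∀ v, v ∈ (ev v : Sym2 V))
    {S : Set (V ⊕ G.edgeSet)} (hS : IsDomSet (middleGraph G) S) :
    IsDomSet (middleGraph G) (toEdge ev '' S) := by
  refine hS.image _ fun x y hyx => ?_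
  rcases x with v | e
  · exact eq_or_adj_edge_of_eq_or_adj_vertex (hev v) hyx
  · exact hyx

end middleGraph

theorem middle_dominating_set_of_edges_general {V : Type*} [Fintype V] (G : SimpleGraph V)
    (hiso : ∀ v : V, ∃ w : V, G.Adj v w)
    (S : Set (V ⊕ G.edgeSet)) (hS : IsDomSet (middleGraph G) S) :
    ∃ S' : Set (V ⊕ G.edgeSet),
      (∀ x ∈ S', ∃ e : G.edgeSet, x = Sum.inr e) ∧
      IsDomSet (middleGraph G) S' ∧ S'.ncard ≤ S.ncard := by
  have hedge : ∀ v : V, ∃ e : G.edgeSet, v ∈ (e : Sym2 V) := fun v =>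
    let ⟨w, hw⟩ := hiso v
    ⟨⟨s(v, w), hw⟩, Sym2.mem_mk_left v w⟩
  choose ev hev using hedge
  refine ⟨middleGraph.toEdge ev '' S, ?_, middleGraph.isDomSet_image_toEdge hev hS,
    Set.ncard_image_le S.toFinite⟩
  rintro _ ⟨v | e, -, rfl⟩
  · exact ⟨ev v, rfl⟩
  · exact ⟨e, rfl⟩

/-- If `G` is a graph of order `n ≥ 2` without isolated vertices and `S` is a
dominating set of the middle graph `M(G)`, then there is a dominating set `S'` of `M(G)`
consisting only of vertices of `M(G)` corresponding to edges of `G`, with `|S'| ≤ |S|`. -/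
theorem middle_dominating_set_of_edges {V : Type*} [Fintype V] (G : SimpleGraph V) (n : ℕ)
    (hord : Fintype.card V = n) (hn : 2 ≤ n)
    (hiso : ∀ v : V, ∃ w : V, G.Adj v w)
    (S : Set (V ⊕ G.edgeSet)) (hS : IsDomSet (middleGraph G) S) :
    ∃ S' : Set (V ⊕ G.edgeSet),
      (∀ x ∈ S', ∃ e : G.edgeSet, x = Sum.inr e) ∧
      IsDomSet (middleGraph G) S' ∧ S'.ncard ≤ S.ncard :=
  middle_dominating_set_of_edges_general G hiso S hS
end

section
/- Let T be a finite tree on n ≥ 2 vertices. Then ⌈n/2⌉ ≤ γ(M(T)) ≤ n − 1, where γ denotes the domination number. -/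
/-!
A vertex of `M(T)` dominates exactly one vertex of `T` (itself) and an edge of `M(T)` dominates
exactly two (its endpoints), so any dominating set of `M(T)` has at least `n / 2` elements.
Conversely, when no vertex of `T` is isolated the `n - 1` edges of `T` dominate `M(T)`.
-/

open Finset

section

variable {V W : Type*}

lemma exists_isDomSet_ncard_eq_domNum (H : SimpleGraph W) :
    ∃ S, IsDomSet H S ∧ S.ncard = domNum H :=
  Nat.sInf_mem (s := {k | ∃ S : Set W, IsDomSet H S ∧ S.ncard = k})
    ⟨_, Set.univ, fun _ => Or.inl trivial, rfl⟩

lemma domNum_le_ncard {H : SimpleGraph W} {S : Set W} (hS : IsDomSet H S) : domNum H ≤ S.ncard :=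
  Nat.sInf_le ⟨S, hS, rfl⟩

namespace middleGraph

variable (G : SimpleGraph V)

/-- The vertices of `G` dominated by an element of `M(G)`. -/
def vertexShadow [DecidableEq V] : V ⊕ G.edgeSet → Finset V :=
  Sum.elim (fun v => {v}) (fun e => (e : Sym2 V).toFinset)

lemma card_vertexShadow_le_two [DecidableEq V] (x : V ⊕ G.edgeSet) :
    #(vertexShadow G x) ≤ 2 := by
  rcases x with v | e
  · simp [vertexShadow]
  · rw [vertexShadow, Sum.elim_inr, Sym2.card_toFinset]
    split_ifs <;> omega

lemma exists_mem_vertexShadow_of_isDomSet [DecidableEq V] {S : Set (V ⊕ G.edgeSet)}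
    (hS : IsDomSet (middleGraph G) S) (v : V) : ∃ x ∈ S, v ∈ vertexShadow G x := by
  rcases hS (Sum.inl v) with hv | ⟨_ | e, hx, hadj⟩
  · exact ⟨_, hv, mem_singleton_self v⟩
  · exact hadj.elim
  · exact ⟨_, hx, Sym2.mem_toFinset.2 hadj⟩

theorem card_le_two_mul_ncard_of_isDomSet [Fintype V] {S : Set (V ⊕ G.edgeSet)}
    (hS : IsDomSet (middleGraph G) S) : Fintype.card V ≤ 2 * S.ncard := by
  classical
  have hfin := S.toFinite
  have hcover : hfin.toFinset.biUnion (vertexShadow G) = univ :=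
    eq_univ_of_forall fun v => by
      obtain ⟨x, hx, hv⟩ := exists_mem_vertexShadow_of_isDomSet G hS v
      exact mem_biUnion.2 ⟨x, hfin.mem_toFinset.2 hx, hv⟩
  calc Fintype.card V = #(hfin.toFinset.biUnion (vertexShadow G)) := by rw [hcover]; rfl
    _ ≤ #hfin.toFinset * 2 :=
      card_biUnion_le_card_mul _ _ _ fun x _ => card_vertexShadow_le_two G x
    _ = 2 * S.ncard := by rw [Set.ncard_eq_toFinset_card S hfin, mul_comm]

theorem card_le_two_mul_domNum [Fintype V] : Fintype.card V ≤ 2 * domNum (middleGraph G) := by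
  obtain ⟨S, hS, hcard⟩ := exists_isDomSet_ncard_eq_domNum (middleGraph G)
  exact hcard ▸ card_le_two_mul_ncard_of_isDomSet G hS

lemma isDomSet_range_inr (h : ∀ v, ∃ w, G.Adj v w) :
    IsDomSet (middleGraph G) (Set.range Sum.inr) := by
  rintro (v | e)
  · obtain ⟨w, hw⟩ := h v
    exact Or.inr ⟨Sum.inr ⟨s(v, w), hw⟩, ⟨_, rfl⟩, Sym2.mem_mk_left v w⟩
  · exact Or.inl ⟨e, rfl⟩

theorem domNum_le_card_edgeSet (h : ∀ v, ∃ w, G.Adj v w) :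
    domNum (middleGraph G) ≤ Nat.card G.edgeSet :=
  (domNum_le_ncard (isDomSet_range_inr G h)).trans_eq
    (Set.ncard_range_of_injective Sum.inr_injective)

end middleGraph

end

/-- For a tree `T` on `n ≥ 2` vertices, `⌈n/2⌉ ≤ γ(M(T)) ≤ n - 1`. -/
theorem domNum_middle_tree_bounds {V : Type*} [Fintype V] (T : SimpleGraph V) (n : ℕ)
    (hord : Fintype.card V = n) (hn : 2 ≤ n) (hT : T.IsTree) :
    (n + 1) / 2 ≤ domNum (middleGraph T) ∧ domNum (middleGraph T) ≤ n - 1 := by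
  have hlower := middleGraph.card_le_two_mul_domNum T
  have hedges : Nat.card T.edgeSet + 1 = n := by
    rw [← hord, ← Nat.card_eq_fintype_card]
    exact (SimpleGraph.isTree_iff_connected_and_card.mp hT).2
  have : Nontrivial V := Fintype.one_lt_card_iff_nontrivial.mp (by omega)
  have hupper := middleGraph.domNum_le_card_edgeSet T
    hT.connected.preconnected.exists_adj_of_nontrivial
  omega
end

section
/- For any double star graph S_{1,n,n} on 2n + 1 vertices with n ≥ 2, γ(M(S_{1,n,n})) = n + 1, where γ denotes the domination number. -/
/-- The double star graph `S_{1,n,n}`: the center `none` is adjacent to the `n` middle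
vertices `some (inl i)`, and each middle vertex `some (inl i)` is adjacent to the
corresponding leaf `some (inr i)`. -/
def doubleStar (n : ℕ) : SimpleGraph (Option (Fin n ⊕ Fin n)) where
  Adj x y :=
    (∃ i, x = none ∧ y = some (Sum.inl i)) ∨
    (∃ i, y = none ∧ x = some (Sum.inl i)) ∨
    (∃ i, x = some (Sum.inl i) ∧ y = some (Sum.inr i)) ∨
    (∃ i, y = some (Sum.inl i) ∧ x = some (Sum.inr i))
  symm := by
    constructor
    rintro x y (⟨i, h1, h2⟩ | ⟨i, h1, h2⟩ | ⟨i, h1, h2⟩ | ⟨i, h1, h2⟩)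
    · exact Or.inr (Or.inl ⟨i, h1, h2⟩)
    · exact Or.inl ⟨i, h1, h2⟩
    · exact Or.inr (Or.inr (Or.inr ⟨i, h1, h2⟩))
    · exact Or.inr (Or.inr (Or.inl ⟨i, h1, h2⟩))
  loopless := by
    constructor
    rintro x (⟨i, h1, h2⟩ | ⟨i, h1, h2⟩ | ⟨i, h1, h2⟩ | ⟨i, h1, h2⟩) <;> simp_all

/-!
In `M(G)`, nonadjacent vertices of `G` have disjoint closed neighbourhoods, since an edge
containing both would join them. The center and the `n` leaves of `S_{1,n,n}` are pairwise
nonadjacent, so every dominating set of `M(S_{1,n,n})` has at least `n + 1` elements.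
Conversely, a set of vertices and edges of `G` covering every vertex of `G` dominates `M(G)`
(every edge has a covered endpoint); the center with the `n` pendant edges is such a set.
-/

open Function

theorem domNum_eq_of_isDomSet {V : Type*} {H : SimpleGraph V} {k : ℕ}
    (hex : ∃ S : Set V, IsDomSet H S ∧ S.ncard = k)
    (hle : ∀ S : Set V, IsDomSet H S → k ≤ S.ncard) : domNum H = k :=
  le_antisymm (Nat.sInf_le hex) (le_csInf ⟨k, hex⟩ fun _ ⟨S, hS, hk⟩ => hk ▸ hle S hS)

/-- A dominating set meets each of the pairwise disjoint closed neighbourhoods. -/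
theorem IsDomSet.card_le_ncard {V ι : Type*} [Finite V] {H : SimpleGraph V} {S : Set V}
    (hS : IsDomSet H S) (p : ι → V)
    (hp : Pairwise (Disjoint on fun i => insert (p i) (H.neighborSet (p i)))) :
    Nat.card ι ≤ S.ncard := by
  have hdom : ∀ i, ∃ s ∈ S, s ∈ insert (p i) (H.neighborSet (p i)) := fun i => by
    rcases hS (p i) with h | ⟨s, hs, hadj⟩
    · exact ⟨p i, h, Set.mem_insert _ _⟩
    · exact ⟨s, hs, Set.mem_insert_of_mem _ hadj⟩
  choose s hsS hsN using hdom
  have hinj : Injective fun i => (⟨s i, hsS i⟩ : S) := fun i j hij => by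
    by_contra hne
    have hsij : s i = s j := congrArg Subtype.val hij
    exact Set.disjoint_left.mp (hp hne) (hsN i) (hsij ▸ hsN j)
  simpa [Nat.card_coe_set_eq] using Nat.card_le_card_of_injective _ hinj

section middleGraph

variable {V : Type*} {G : SimpleGraph V}

@[simp]
theorem middleGraph_adj_inl_inl (v w : V) : ¬(middleGraph G).Adj (.inl v) (.inl w) :=
  id

@[simp]
theorem middleGraph_adj_inl_inr (v : V) (e : G.edgeSet) :
    (middleGraph G).Adj (.inl v) (.inr e) ↔ v ∈ (e : Sym2 V) :=
  Iff.rfl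

theorem middleGraph_disjoint_closedNbhd {v w : V} (hne : v ≠ w) (hvw : ¬G.Adj v w) :
    Disjoint (insert (.inl v) ((middleGraph G).neighborSet (.inl v)))
      (insert (.inl w) ((middleGraph G).neighborSet (.inl w))) := by
  rw [Set.disjoint_left]
  rintro (u | e) hv hw
  · simp_all
  · simp only [Set.mem_insert_iff, reduceCtorEq, false_or, SimpleGraph.mem_neighborSet,
      middleGraph_adj_inl_inr] at hv hw
    obtain ⟨e, he⟩ := e
    obtain rfl : e = s(v, w) := (Sym2.mem_and_mem_iff hne).mp ⟨hv, hw⟩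
    exact hvw he

theorem IsDomSet.card_le_ncard_middleGraph [Finite V] {S : Set (V ⊕ G.edgeSet)}
    (hS : IsDomSet (middleGraph G) S) {ι : Type*} (p : ι → V) (hp : Injective p)
    (hind : ∀ i j, ¬G.Adj (p i) (p j)) : Nat.card ι ≤ S.ncard :=
  hS.card_le_ncard (Sum.inl ∘ p) fun _ _ hij =>
    middleGraph_disjoint_closedNbhd (hp.ne hij) (hind _ _)

/-- Every edge has an endpoint, and that endpoint is either in `A` or on an edge of `F`;
in both cases the edge is dominated. -/
theorem isDomSet_middleGraph_of_cover (A : Set V) (F : Set G.edgeSet)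
    (hcover : ∀ v, v ∈ A ∨ ∃ f ∈ F, v ∈ (f : Sym2 V)) :
    IsDomSet (middleGraph G) (Sum.inl '' A ∪ Sum.inr '' F) := by
  rintro (v | e)
  · rcases hcover v with hv | ⟨f, hf, hvf⟩
    · exact .inl (.inl ⟨v, hv, rfl⟩)
    · exact .inr ⟨.inr f, .inr ⟨f, hf, rfl⟩, hvf⟩
  · obtain ⟨u, hu⟩ : ∃ u, u ∈ (e : Sym2 V) := ⟨_, Sym2.out_fst_mem _⟩
    rcases hcover u with huA | ⟨f, hf, huf⟩
    · exact .inr ⟨.inl u, .inl ⟨u, huA, rfl⟩, hu⟩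
    · by_cases hef : e = f
      · exact .inl (.inr ⟨f, hf, hef ▸ rfl⟩)
      · exact .inr ⟨.inr f, .inr ⟨f, hf, rfl⟩, hef, u, hu, huf⟩

end middleGraph

namespace doubleStar

theorem not_adj_map_inr (n : ℕ) (o o' : Option (Fin n)) :
    ¬(doubleStar n).Adj (o.map Sum.inr) (o'.map Sum.inr) := by
  cases o <;> cases o' <;> simp [doubleStar]

def leafEdge (n : ℕ) (i : Fin n) : (doubleStar n).edgeSet :=
  ⟨s(some (.inl i), some (.inr i)), Or.inr (Or.inr (Or.inl ⟨i, rfl, rfl⟩))⟩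

theorem leafEdge_injective (n : ℕ) : Injective (leafEdge n) := fun i j h => by
  simpa [leafEdge] using congrArg Subtype.val h

theorem center_or_mem_leafEdge (n : ℕ) (v : Option (Fin n ⊕ Fin n)) :
    v ∈ ({none} : Set _) ∨ ∃ f ∈ Set.range (leafEdge n), v ∈ (f : Sym2 _) := by
  rcases v with _ | i | i
  · exact .inl rfl
  all_goals exact .inr ⟨_, ⟨i, rfl⟩, by simp [leafEdge]⟩

end doubleStar

theorem domNum_middle_doubleStar_general (n : ℕ) :
    domNum (middleGraph (doubleStar n)) = n + 1 := by
  apply domNum_eq_of_isDomSet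
  · refine ⟨_, isDomSet_middleGraph_of_cover _ _ (doubleStar.center_or_mem_leafEdge n), ?_⟩
    rw [Set.ncard_union_eq (by simp), Set.ncard_image_of_injective _
      Sum.inl_injective, Set.ncard_image_of_injective _ Sum.inr_injective,
      Set.ncard_range_of_injective (doubleStar.leafEdge_injective n)]
    simp [add_comm]
  · intro S hS
    simpa using hS.card_le_ncard_middleGraph _ (Option.map_injective Sum.inr_injective)
      (doubleStar.not_adj_map_inr n)

/-- For any double star graph `S_{1,n,n}` on `2n + 1` vertices with `n ≥ 2`,
`γ(M(S_{1,n,n})) = n + 1`. -/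
theorem domNum_middle_doubleStar (n : ℕ) (hn : 2 ≤ n) :
    domNum (middleGraph (doubleStar n)) = n + 1 :=
  domNum_middle_doubleStar_general n
end
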